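/- (Gradient constraint sign in the no-trade region) Let g(z) = λ p w(z) - (1+λz) w_z(z) on [ζ₁, ζ₂], where w(z) = a - (c/ν) h(z-θ) with a, c > 0, h(δ) = (3/2)δ²λ^{2/3} - δ⁴/ν² + (3/2)Bδ²λ^{4/3}, and the endpoints satisfy ζᵢ - θ = ±(ν/2)λ^{1/3}(1 - ξλ^{1/3}) + o(λ^{2/3}) with ξ ≥ 1, and g(ζ₁) = 0. Then g_z(z) = (c/ν)(1+λz)h''(z-θ) + λ²p(c/ν)h'(z-θ) is a concave-in-(z-θ)² expression whose values at both endpoints are (12c/ν)λ^{2/3}[½ξλ^{1/3} + o(λ^{1/3})] > 0 for λ small; hence g ≥ 0 on [ζ₁, ζ₂] for all sufficiently small λ > 0. -/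

import Mathlib

/-!
Write `λ = L³`. Then `g' = (c/ν) (λ(1-p) h'(z-θ) + (1+λz) h''(z-θ))`. Taking the `o(λ^{2/3})`
errors of the endpoints below `(ν/4) λ^{2/3}`, every `z ∈ [ζ₁, ζ₂]` has
`|z - θ| ≤ r := (ν/2) L (1 - ξL) + (ν/4) L²`. Since `h''` decreases in `δ²`, its minimum on
`[-r, r]` is `h''(±r) = 3L²·u(2 - u) + 3BL⁴` with `u = ξL - L/2 ≥ L/2` (as `ξ ≥ 1`), hence at
least `2L³`. The drift term `λ(1-p)h'` is only `O(L⁶)` and `1 + λz ≥ 1` once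
`νL ≤ θ`, so `g' > 0` on `[ζ₁, ζ₂]`, and `g`, which vanishes at `ζ₁`, is nonnegative there.
-/

open Real Set

/-- `h(δ) = (3/2)δ²λ^{2/3} - δ⁴/ν² + (3/2)Bδ²λ^{4/3}`. -/
noncomputable def hFn (nu B lam δ : ℝ) : ℝ :=
  (3/2) * δ ^ 2 * lam ^ ((2:ℝ)/3) - δ ^ 4 / nu ^ 2 + (3/2) * B * δ ^ 2 * lam ^ ((4:ℝ)/3)

/-- `w(z) = a - (c/ν) h(z-θ)`. -/
noncomputable def wFn (nu B th a c lam z : ℝ) : ℝ := a - (c / nu) * hFn nu B lam (z - th)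

/-- `g(z) = λ p w(z) - (1+λz) w_z(z)`. -/
noncomputable def gFn (nu B th a c lam p z : ℝ) : ℝ :=
  lam * p * wFn nu B th a c lam z - (1 + lam * z) * deriv (wFn nu B th a c lam) z

open Filter Topology

noncomputable def hFnDeriv (nu B lam δ : ℝ) : ℝ :=
  3 * δ * lam ^ ((2:ℝ)/3) - 4 * δ ^ 3 / nu ^ 2 + 3 * B * δ * lam ^ ((4:ℝ)/3)

noncomputable def hFnDeriv2 (nu B lam δ : ℝ) : ℝ :=
  3 * lam ^ ((2:ℝ)/3) - 12 * δ ^ 2 / nu ^ 2 + 3 * B * lam ^ ((4:ℝ)/3)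

lemma hasDerivAt_hFn (nu B lam δ : ℝ) : HasDerivAt (hFn nu B lam) (hFnDeriv nu B lam δ) δ := by
  have h2 := hasDerivAt_pow 2 δ
  have h4 := hasDerivAt_pow 4 δ
  refine ((((h2.const_mul (3/2)).mul_const (lam ^ ((2:ℝ)/3))).sub (h4.div_const (nu ^ 2))).add
    ((h2.const_mul (3/2 * B)).mul_const (lam ^ ((4:ℝ)/3)))).congr_deriv ?_
  simp only [hFnDeriv]; push_cast; ring

lemma hasDerivAt_hFnDeriv (nu B lam δ : ℝ) :
    HasDerivAt (hFnDeriv nu B lam) (hFnDeriv2 nu B lam δ) δ := by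
  have h1 := hasDerivAt_id' δ
  have h3 := hasDerivAt_pow 3 δ
  refine ((((h1.const_mul 3).mul_const (lam ^ ((2:ℝ)/3))).sub
    ((h3.const_mul 4).div_const (nu ^ 2))).add
    ((h1.const_mul (3 * B)).mul_const (lam ^ ((4:ℝ)/3)))).congr_deriv ?_
  simp only [hFnDeriv2]; push_cast; ring

lemma hasDerivAt_wFn (nu B th a c lam z : ℝ) :
    HasDerivAt (wFn nu B th a c lam) (-(c / nu * hFnDeriv nu B lam (z - th))) z :=
  (((hasDerivAt_hFn nu B lam (z - th)).comp_sub_const z th).const_mul (c / nu)).const_sub a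

lemma hasDerivAt_gFn (nu B th a c lam p z : ℝ) :
    HasDerivAt (gFn nu B th a c lam p)
      (c / nu * (lam * (1 - p) * hFnDeriv nu B lam (z - th)
        + (1 + lam * z) * hFnDeriv2 nu B lam (z - th))) z := by
  have hg : gFn nu B th a c lam p = fun z =>
      lam * p * wFn nu B th a c lam z + (1 + lam * z) * (c / nu * hFnDeriv nu B lam (z - th)) := by
    funext z
    rw [gFn, (hasDerivAt_wFn nu B th a c lam z).deriv]
    ring
  rw [hg]
  have hw' := ((hasDerivAt_hFnDeriv nu B lam (z - th)).comp_sub_const z th).const_mul (c / nu)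
  refine ((hasDerivAt_wFn nu B th a c lam z).const_mul (lam * p) |>.add <|
    (((hasDerivAt_id' z).const_mul lam).const_add 1).mul hw').congr_deriv ?_
  ring

lemma cube_rpow_natCast_div_three {L : ℝ} (hL : 0 ≤ L) (n : ℕ) :
    (L ^ 3) ^ ((n : ℝ) / 3) = L ^ n := by
  rw [← rpow_natCast L 3, ← rpow_mul hL, ← rpow_natCast]
  congr 1; push_cast; ring

section Bounds

variable {nu B xi L δ : ℝ}

lemma hFnDeriv_cube (hL : 0 ≤ L) :
    hFnDeriv nu B (L ^ 3) δ = 3 * δ * L ^ 2 - 4 * δ ^ 3 / nu ^ 2 + 3 * B * δ * L ^ 4 := by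
  rw [hFnDeriv, show ((2:ℝ)/3) = (2:ℕ)/3 by norm_num, show ((4:ℝ)/3) = (4:ℕ)/3 by norm_num,
    cube_rpow_natCast_div_three hL, cube_rpow_natCast_div_three hL]

lemma hFnDeriv2_cube (hL : 0 ≤ L) :
    hFnDeriv2 nu B (L ^ 3) δ = 3 * L ^ 2 - 12 * δ ^ 2 / nu ^ 2 + 3 * B * L ^ 4 := by
  rw [hFnDeriv2, show ((2:ℝ)/3) = (2:ℕ)/3 by norm_num, show ((4:ℝ)/3) = (4:ℕ)/3 by norm_num,
    cube_rpow_natCast_div_three hL, cube_rpow_natCast_div_three hL]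

lemma neg_le_hFnDeriv_cube (hnu : 0 < nu) (hB : 0 ≤ B) (hL : 0 < L) (hL1 : L ≤ 1)
    (hδ : |δ| ≤ nu * L) : -((7 + 3 * B) * nu * L ^ 3) ≤ hFnDeriv nu B (L ^ 3) δ := by
  rw [hFnDeriv_cube hL.le]
  obtain ⟨hδl, hδu⟩ := abs_le.1 hδ
  have hcube : δ ^ 3 ≤ (nu * L) ^ 3 :=
    (le_abs_self _).trans (by rw [abs_pow]; exact pow_le_pow_left₀ (abs_nonneg δ) hδ 3)
  have h4 : 4 * δ ^ 3 / nu ^ 2 ≤ 4 * nu * L ^ 3 := by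
    rw [div_le_iff₀ (by positivity)]; nlinarith
  have hL43 : L ^ 4 ≤ L ^ 3 := pow_le_pow_of_le_one hL.le hL1 (by norm_num)
  nlinarith [mul_nonneg hB (pow_nonneg hL.le 4), mul_nonneg (mul_nonneg hB hnu.le)
    (sub_nonneg.2 hL43), sq_nonneg L]

lemma two_mul_cube_le_hFnDeriv2_cube (hnu : 0 < nu) (hB : 0 ≤ B) (hxi : 1 ≤ xi) (hL : 0 < L)
    (hLxi : xi * L ≤ 1 / 4) (hδ : |δ| ≤ nu / 2 * L * (1 - xi * L) + nu / 4 * L ^ 2) :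
    2 * L ^ 3 ≤ hFnDeriv2 nu B (L ^ 3) δ := by
  rw [hFnDeriv2_cube hL.le]
  have hsq : δ ^ 2 ≤ (nu / 2 * L * (1 - xi * L) + nu / 4 * L ^ 2) ^ 2 := by
    rw [← sq_abs]; exact pow_le_pow_left₀ (abs_nonneg δ) hδ 2
  have h12 : 12 * δ ^ 2 / nu ^ 2 ≤ 3 * L ^ 2 * (1 - (xi * L - L / 2)) ^ 2 := by
    rw [div_le_iff₀ (by positivity)]; nlinarith
  nlinarith [mul_nonneg hB (pow_nonneg hL.le 4), pow_pos hL 3, mul_nonneg (pow_nonneg hL.le 2)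
    (mul_nonneg (by nlinarith : 0 ≤ xi * L - L) (by nlinarith : (0:ℝ) ≤ 7 / 4 - (xi * L - L / 2)))]

end Bounds

lemma nonneg_on_Icc_of_deriv_nonneg {f : ℝ → ℝ} {a b : ℝ} (hf : Differentiable ℝ f)
    (hf' : ∀ x ∈ Icc a b, 0 ≤ deriv f x) (ha : f a = 0) : ∀ x ∈ Icc a b, 0 ≤ f x := by
  have hmono : MonotoneOn f (Icc a b) := monotoneOn_of_deriv_nonneg (convex_Icc a b)
    hf.continuous.continuousOn hf.differentiableOn fun x hx => hf' x (interior_subset hx)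
  intro x hx
  exact ha ▸ hmono (left_mem_Icc.2 (hx.1.trans hx.2)) hx hx.1

lemma deriv_gFn_cube_pos {nu B th a c p xi L z : ℝ} (hnu : 0 < nu) (hB : 0 ≤ B) (hp1 : p < 1)
    (hxi : 1 ≤ xi) (hc : 0 < c) (hL : 0 < L) (hLxi : xi * L ≤ 1 / 4)
    (hLC : (1 - p) * (7 + 3 * B) * nu * L ^ 3 ≤ 1) (hz : 0 ≤ z)
    (hδ : |z - th| ≤ nu / 2 * L * (1 - xi * L) + nu / 4 * L ^ 2) :
    0 < deriv (gFn nu B th a c (L ^ 3) p) z := by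
  rw [(hasDerivAt_gFn nu B th a c (L ^ 3) p z).deriv]
  have hL1 : L ≤ 1 := by nlinarith
  have hνL : 0 ≤ nu * L := (mul_pos hnu hL).le
  have h' := neg_le_hFnDeriv_cube hnu hB hL hL1 <| hδ.trans <| by
    nlinarith [mul_nonneg hνL (sub_nonneg.2 hL1),
      mul_nonneg hνL (mul_pos (by linarith : (0:ℝ) < xi) hL).le]
  have h'' := two_mul_cube_le_hFnDeriv2_cube hnu hB hxi hL hLxi hδ
  have hdrift : -L ^ 3 ≤ L ^ 3 * (1 - p) * hFnDeriv nu B (L ^ 3) (z - th) := by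
    nlinarith [mul_le_mul_of_nonneg_left h' (by nlinarith [pow_pos hL 3] : 0 ≤ L ^ 3 * (1 - p)),
      mul_le_mul_of_nonneg_left hLC (pow_pos hL 3).le]
  have hdiff : 2 * L ^ 3 ≤ (1 + L ^ 3 * z) * hFnDeriv2 nu B (L ^ 3) (z - th) := by
    nlinarith [mul_nonneg (mul_nonneg (pow_pos hL 3).le hz) (by linarith [pow_pos hL 3] :
      0 ≤ hFnDeriv2 nu B (L ^ 3) (z - th))]
  exact mul_pos (div_pos hc hnu) (by linarith [pow_pos hL 3])

lemma deriv_pos_and_nonneg_gFn_cube {nu B th a c p xi L z1 z2 : ℝ} (hnu : 0 < nu) (hB : 0 ≤ B)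
    (hp1 : p < 1) (hxi : 1 ≤ xi) (hc : 0 < c) (hL : 0 < L)
    (hsmall : xi * L ≤ 1 / 4 ∧ nu * L ≤ th ∧ (1 - p) * (7 + 3 * B) * nu * L ^ 3 ≤ 1)
    (hz1 : |z1 - th + nu / 2 * L * (1 - xi * L)| ≤ nu / 4 * L ^ 2)
    (hz2 : |z2 - th - nu / 2 * L * (1 - xi * L)| ≤ nu / 4 * L ^ 2)
    (hg1 : gFn nu B th a c (L ^ 3) p z1 = 0) :
    0 < deriv (gFn nu B th a c (L ^ 3) p) z1 ∧ 0 < deriv (gFn nu B th a c (L ^ 3) p) z2 ∧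
      ∀ z ∈ Icc z1 z2, 0 ≤ gFn nu B th a c (L ^ 3) p z := by
  obtain ⟨hLxi, hLth, hLC⟩ := hsmall
  obtain ⟨hz1l, hz1u⟩ := abs_le.1 hz1
  obtain ⟨hz2l, hz2u⟩ := abs_le.1 hz2
  have hL1 : L ≤ 1 := by nlinarith
  have hpos : ∀ z ∈ Icc z1 z2, 0 < deriv (gFn nu B th a c (L ^ 3) p) z := by
    intro z ⟨hz1z, hzz2⟩
    refine deriv_gFn_cube_pos hnu hB hp1 hxi hc hL hLxi hLC ?_ (abs_le.2 ⟨by linarith, by linarith⟩)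
    nlinarith [mul_nonneg (mul_pos hnu hL).le (sub_nonneg.2 hL1)]
  have hz12 : z1 ≤ z2 := by nlinarith [mul_nonneg (mul_pos hnu hL).le (sub_nonneg.2 hL1)]
  refine ⟨hpos z1 (left_mem_Icc.2 hz12), hpos z2 (right_mem_Icc.2 hz12), ?_⟩
  exact nonneg_on_Icc_of_deriv_nonneg
    (fun z => (hasDerivAt_gFn nu B th a c (L ^ 3) p z).differentiableAt)
    (fun z hz => (hpos z hz).le) hg1

lemma eventually_small_scale {th : ℝ} (hth : 0 < th) (nu xi C : ℝ) :
    ∀ᶠ L in 𝓝 (0:ℝ), xi * L ≤ 1 / 4 ∧ nu * L ≤ th ∧ C * L ^ 3 ≤ 1 := by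
  have small : ∀ {f : ℝ → ℝ} {b : ℝ}, Continuous f → f 0 = 0 → 0 < b → ∀ᶠ L in 𝓝 0, f L ≤ b :=
    fun hf hf0 hb => (hf0 ▸ hf.tendsto 0).eventually_le_const hb
  exact (small (by fun_prop) (mul_zero xi) (by norm_num)).and <|
    (small (by fun_prop) (mul_zero nu) hth).and (small (by fun_prop) (by simp) one_pos)

theorem stmt10_general (nu B th p xi K : ℝ) (hnu : 0 < nu) (hB : 1 ≤ B) (hth : 0 < th)
    (hp1 : p < 1) (hxi : 1 ≤ xi) (hK : 1 ≤ K)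
    (a c zeta1 zeta2 : ℝ → ℝ)
    (hac : ∀ lam ∈ Ioo (0:ℝ) 1, 0 < a lam ∧ a lam ≤ K ∧ 1/K ≤ c lam ∧ c lam ≤ K)
    (hz1 : ∀ ε > 0, ∃ lam0 > 0, ∀ lam ∈ Ioo (0:ℝ) lam0,
      |zeta1 lam - th + (nu/2) * lam ^ ((1:ℝ)/3) * (1 - xi * lam ^ ((1:ℝ)/3))|
        ≤ ε * lam ^ ((2:ℝ)/3))
    (hz2 : ∀ ε > 0, ∃ lam0 > 0, ∀ lam ∈ Ioo (0:ℝ) lam0,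
      |zeta2 lam - th - (nu/2) * lam ^ ((1:ℝ)/3) * (1 - xi * lam ^ ((1:ℝ)/3))|
        ≤ ε * lam ^ ((2:ℝ)/3))
    (hg1 : ∀ lam ∈ Ioo (0:ℝ) 1, gFn nu B th (a lam) (c lam) lam p (zeta1 lam) = 0) :
    ∃ lam0 > 0, ∀ lam ∈ Ioo (0:ℝ) lam0,
      0 < deriv (gFn nu B th (a lam) (c lam) lam p) (zeta1 lam) ∧
      0 < deriv (gFn nu B th (a lam) (c lam) lam p) (zeta2 lam) ∧
      ∀ z ∈ Icc (zeta1 lam) (zeta2 lam), 0 ≤ gFn nu B th (a lam) (c lam) lam p z := by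
  obtain ⟨l1, hl1, H1⟩ := hz1 (nu / 4) (by positivity)
  obtain ⟨l2, hl2, H2⟩ := hz2 (nu / 4) (by positivity)
  obtain ⟨ε, hε, hsmall⟩ := Metric.eventually_nhds_iff.1
    (eventually_small_scale hth nu xi ((1 - p) * (7 + 3 * B) * nu))
  refine ⟨min l1 (min l2 (min (ε ^ 3) 1)), by positivity, fun lam ⟨hlam, hlam0⟩ => ?_⟩
  simp only [lt_min_iff] at hlam0
  obtain ⟨hlam1, hlam2, hlamε, hlam_one⟩ := hlam0
  obtain ⟨L, hL, rfl⟩ : ∃ L > 0, lam = L ^ 3 :=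
    ⟨lam ^ ((1:ℝ) / 3), by positivity, by
      rw [one_div, ← Nat.cast_ofNat, rpow_inv_natCast_pow hlam.le three_ne_zero]⟩
  have hcube : ∀ n : ℕ, (L ^ 3) ^ ((n : ℝ) / 3) = L ^ n := cube_rpow_natCast_div_three hL.le
  have b1 := H1 _ ⟨hlam, hlam1⟩
  have b2 := H2 _ ⟨hlam, hlam2⟩
  rw [show ((2:ℝ) / 3) = (2:ℕ) / 3 by norm_num, show ((1:ℝ) / 3) = (1:ℕ) / 3 by norm_num,
    hcube, hcube, pow_one] at b1 b2
  have hc : 0 < c (L ^ 3) := (by positivity : (0:ℝ) < 1 / K).trans_le (hac _ ⟨hlam, hlam_one⟩).2.2.1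
  refine deriv_pos_and_nonneg_gFn_cube hnu (by linarith) hp1 hxi hc hL (hsmall ?_) b1 b2
    (hg1 _ ⟨hlam, hlam_one⟩)
  rw [dist_zero_right, norm_of_nonneg hL.le]
  exact lt_of_pow_lt_pow_left₀ 3 hε.le hlamε

/-- Gradient-constraint sign in the no-trade region: with endpoints
`ζᵢ - θ = ±(ν/2)λ^{1/3}(1-ξλ^{1/3}) + o(λ^{2/3})` and `g(ζ₁) = 0`, the derivative of `g`
is positive at both endpoints and `g ≥ 0` on `[ζ₁, ζ₂]` for all small `λ > 0`. -/
theorem stmt10 (nu B th p xi K : ℝ) (hnu : 0 < nu) (hB : 1 ≤ B) (hth : 0 < th)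
    (hp1 : p < 1) (hp0 : p ≠ 0) (hxi : 1 ≤ xi) (hK : 1 ≤ K)
    (a c zeta1 zeta2 : ℝ → ℝ)
    (hac : ∀ lam ∈ Ioo (0:ℝ) 1, 0 < a lam ∧ a lam ≤ K ∧ 1/K ≤ c lam ∧ c lam ≤ K)
    (hz1 : ∀ ε > 0, ∃ lam0 > 0, ∀ lam ∈ Ioo (0:ℝ) lam0,
      |zeta1 lam - th + (nu/2) * lam ^ ((1:ℝ)/3) * (1 - xi * lam ^ ((1:ℝ)/3))|
        ≤ ε * lam ^ ((2:ℝ)/3))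
    (hz2 : ∀ ε > 0, ∃ lam0 > 0, ∀ lam ∈ Ioo (0:ℝ) lam0,
      |zeta2 lam - th - (nu/2) * lam ^ ((1:ℝ)/3) * (1 - xi * lam ^ ((1:ℝ)/3))|
        ≤ ε * lam ^ ((2:ℝ)/3))
    (hg1 : ∀ lam ∈ Ioo (0:ℝ) 1, gFn nu B th (a lam) (c lam) lam p (zeta1 lam) = 0) :
    ∃ lam0 > 0, ∀ lam ∈ Ioo (0:ℝ) lam0,
      0 < deriv (gFn nu B th (a lam) (c lam) lam p) (zeta1 lam) ∧
      0 < deriv (gFn nu B th (a lam) (c lam) lam p) (zeta2 lam) ∧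
      ∀ z ∈ Icc (zeta1 lam) (zeta2 lam), 0 ≤ gFn nu B th (a lam) (c lam) lam p z :=
  stmt10_general nu B th p xi K hnu hB hth hp1 hxi hK a c zeta1 zeta2 hac hz1 hz2 hg1
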